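/- Let S_⊥ be a non-trivial monoid with zero ⊥ and no non-zero zero-divisors (s·t = ⊥ implies s = ⊥ or t = ⊥). Then the basic C-set (S_⊥, 3), with action α[a,b] = a if α = T, b if α = F, ⊥ if α = U, together with the operation s ∘ α = α if s ≠ ⊥ and s ∘ α = U if s = ⊥, satisfies all nine C-monoid axioms: ⊥ ∘ α = U; t ∘ U = U; 1 ∘ α = α; s ∘ (¬α) = ¬(s ∘ α); s ∘ (α ∧ β) = (s ∘ α) ∧ (s ∘ β); (s·t) ∘ α = s ∘ (t ∘ α); α[s,t]·u = α[s·u, t·u]; r·α[s,t] = (r ∘ α)[r·s, r·t]; and α[s,t] ∘ β = (α ∧ (s ∘ β)) ∨ (¬α ∧ (t ∘ β)). -/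
import Mathlib


inductive Three | T | F | U
deriving DecidableEq

namespace Three

def neg : Three → Three
  | T => F
  | F => T
  | U => U

def and : Three → Three → Three
  | T, x => x
  | F, _ => F
  | U, _ => U

def or : Three → Three → Three
  | T, _ => T
  | F, x => x
  | U, _ => U

end Three

/-- The basic C-set action of `3` on a monoid with zero. -/
def bact {S : Type*} [Zero S] : Three → S → S → S
  | Three.T, a, _ => a
  | Three.F, _, b => b
  | Three.U, _, _ => 0

open Classical in
/-- `s ∘ α = α` if `s ≠ ⊥` and `U` otherwise. -/
noncomputable def bcomp {S : Type*} [Zero S] (s : S) (α : Three) : Three :=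
  if s = 0 then Three.U else α

/-- The basic C-set `(S_⊥, 3)` with `∘` satisfies all nine C-monoid axioms. -/
theorem stmt6 {S : Type*} [MonoidWithZero S] [NoZeroDivisors S] [Nontrivial S] :
    (∀ α : Three, bcomp (0 : S) α = Three.U) ∧
    (∀ t : S, bcomp t Three.U = Three.U) ∧
    (∀ α : Three, bcomp (1 : S) α = α) ∧
    (∀ (s : S) (α : Three), bcomp s α.neg = (bcomp s α).neg) ∧
    (∀ (s : S) (α β : Three), bcomp s (α.and β) = (bcomp s α).and (bcomp s β)) ∧
    (∀ (s t : S) (α : Three), bcomp (s * t) α = bcomp s (bcomp t α)) ∧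
    (∀ (α : Three) (s t u : S), bact α s t * u = bact α (s * u) (t * u)) ∧
    (∀ (α : Three) (r s t : S), r * bact α s t = bact (bcomp r α) (r * s) (r * t)) ∧
    (∀ (α β : Three) (s t : S),
      bcomp (bact α s t) β = (α.and (bcomp s β)).or (α.neg.and (bcomp t β))) := by

  refine ⟨?_, ?_, ?_, ?_, ?_, ?_, ?_, ?_, ?_⟩
  · intro α; simp [bcomp]
  · intro t; simp [bcomp]
  · intro α; simp [bcomp]
  · intro s α; by_cases h : s = 0 <;> simp [bcomp, h, Three.neg]
  · intro s α β; by_cases h : s = 0 <;> simp [bcomp, h] <;> cases α <;> simp [Three.and]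
  · intro s t α
    by_cases hs : s = 0 <;> by_cases ht : t = 0 <;>
      simp [bcomp, hs, ht, mul_eq_zero]
  · intro α s t u; cases α <;> simp [bact]
  · intro α r s t
    by_cases hr : r = 0
    · cases α <;> simp [bact, bcomp, hr]
    · cases α <;> simp [bact, bcomp, hr]
  · intro α β s t
    cases α <;> by_cases hs : s = 0 <;> by_cases ht : t = 0 <;>
      simp [bact, bcomp, hs, ht, Three.and, Three.or, Three.neg] <;>
      cases β <;> simp [Three.and, Three.or]
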